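/- arXiv:1301.4025 — 2 statements merged into one kernel-verified Lean document; each statement's English description precedes it below -/
import Mathlib

section
/- Let G be a free group of finite rank r, let φ: ℤ → Aut(G) be a homomorphism, and let Γ = ℤ ⋉_φ G be the corresponding semidirect product. Let f: ℕ → ℝ_{≥0} be a function with lim_{n→∞} f(n) = ∞. Then there exists a normal cofinal filtration {Γ_i}_{i∈ℕ} of Γ such that d(Γ_i) ≤ f([Γ:Γ_i]) for every i ∈ ℕ. -/
/-!
Let `Kₙ ≤ G` be the intersection of the kernels of all homomorphisms `G → Sₙ`. It is a
characteristic subgroup of finite index, and `⋂ₙ Kₙ = 1` because `G` is residually finite: for a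
free group, left multiplication by the generators on the ball of radius `L` in the word metric,
completed to permutations of that finite ball, moves `1` to `w` whenever `|w| ≤ L`.

The automorphism `φ(1)` induces one of finite order `dₙ` on `G ⧸ Kₙ`, so for `dₙ ∣ N` the
subgroup `Kₙ ⋊ Nℤ` is normal, of finite index at least `N`, and generated by the generators of
`Kₙ` together with `N`; the number of generators does not depend on `N`. Since `f → ∞`, choosing
`Nₙ` divisible by `Nₙ₋₁` and `dₙ`, and large enough that `f` exceeds that number beyond `Nₙ`,
gives the filtration.
-/

open Filter
open scoped NNReal

theorem MonoidHom.finite_of_fg {G H : Type*} [Group G] [Group H] [Group.FG G] [Finite H] :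
    Finite (G →* H) := by
  obtain ⟨s, hs, hfin⟩ := Group.fg_iff.mp ‹_›
  have := hfin.to_subtype
  exact Finite.of_injective (fun ρ : G →* H => fun x : s => ρ x) fun ρ σ h =>
    MonoidHom.eq_of_eqOn_dense hs fun x hx => congrFun h ⟨x, hx⟩

namespace Subgroup

variable {G : Type*} [Group G]

theorem finiteIndex_of_inv_mul_mem {H : Subgroup G} {X : Type*} [Finite X] (f : G → X)
    (hf : ∀ x y, f x = f y → x⁻¹ * y ∈ H) : H.FiniteIndex := by
  have : Finite (G ⧸ H) := Finite.of_injective (fun q : G ⧸ H => f q.out) fun p q h => by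
    rw [← p.out_eq, ← q.out_eq]
    exact QuotientGroup.eq.mpr (hf _ _ h)
  exact finiteIndex_of_finite_quotient

theorem exists_finset_closure_eq_top_card_le {H : Subgroup G} (s : Finset G)
    (hs : closure (s : Set G) = H) :
    ∃ S : Finset H, closure (S : Set H) = ⊤ ∧ S.card ≤ s.card := by
  classical
  subst hs
  refine ⟨s.preimage Subtype.val Subtype.val_injective.injOn, ?_, ?_⟩
  · rw [Finset.coe_preimage]
    exact closure_preimage_eq_top (s : Set G)
  · exact Finset.card_le_card_of_injOn Subtype.val (fun x hx => Finset.mem_preimage.mp hx)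
      Subtype.val_injective.injOn

variable (G) in
def permKernel (n : ℕ) : Subgroup G :=
  ⨅ ρ : G →* Equiv.Perm (Fin n), ρ.ker

theorem mem_permKernel {n : ℕ} {x : G} :
    x ∈ permKernel G n ↔ ∀ ρ : G →* Equiv.Perm (Fin n), ρ x = 1 := by
  simp [permKernel, mem_iInf, MonoidHom.mem_ker]

theorem permKernel_le_ker {X : Type*} [Finite X] {n : ℕ} (hX : Nat.card X ≤ n)
    (ρ : G →* Equiv.Perm X) : permKernel G n ≤ ρ.ker := by
  have := Fintype.ofFinite X
  obtain ⟨ι⟩ : Nonempty (X ↪ Fin n) :=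
    Function.Embedding.nonempty_of_card_le (by simpa [Nat.card_eq_fintype_card] using hX)
  intro x hx
  refine Equiv.Perm.viaEmbeddingHom_injective ι ?_
  simpa using mem_permKernel.mp hx ((Equiv.Perm.viaEmbeddingHom ι).comp ρ)

theorem permKernel_antitone : Antitone (permKernel G) := fun _ _ hmn =>
  le_iInf fun ρ => permKernel_le_ker (by simpa using hmn) ρ

instance permKernel_characteristic (n : ℕ) : (permKernel G n).Characteristic :=
  characteristic_iff_le_comap.mpr fun e _ hx =>
    mem_permKernel.mpr fun ρ => mem_permKernel.mp hx (ρ.comp e.toMonoidHom)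

instance permKernel_finiteIndex [Group.FG G] (n : ℕ) : (permKernel G n).FiniteIndex :=
  have := MonoidHom.finite_of_fg (G := G) (H := Equiv.Perm (Fin n))
  finiteIndex_iInf fun ρ => finiteIndex_ker ρ

theorem iInf_permKernel_eq_bot [Group.ResiduallyFinite G] : ⨅ n, permKernel G n = ⊥ := by
  refine eq_bot_iff_forall _ |>.mpr fun x hx =>
    Group.residuallyFinite_iff_forall_finiteIndex.mp ‹_› x fun H _ => ?_
  have hker := permKernel_le_ker le_rfl (MulAction.toPermHom G (G ⧸ H)) (mem_iInf.mp hx _)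
  have := DFunLike.congr_fun (MonoidHom.mem_ker.mp hker) ((1 : G) : G ⧸ H)
  simpa [QuotientGroup.eq] using this

end Subgroup

namespace Equiv.Perm

variable {G : Type*} [Group G] (B : Set G) (g : G)

def mulLeftRestrict : {x : B // g * x ∈ B} ≃ {y : B // g⁻¹ * y ∈ B} where
  toFun x := ⟨⟨g * x, x.2⟩, by simp⟩
  invFun y := ⟨⟨g⁻¹ * y, y.2⟩, by simp⟩
  left_inv x := by simp
  right_inv y := by simp

variable [Finite B]

noncomputable def extendMulLeft : Equiv.Perm B := by
  classical
  exact (mulLeftRestrict B g).extendSubtype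

variable {B g}

theorem extendMulLeft_apply {x : B} (hx : g * x ∈ B) : (extendMulLeft B g x : G) = g * x := by
  classical
  rw [extendMulLeft, Equiv.extendSubtype_apply_of_mem (mulLeftRestrict B g) _ hx]
  rfl

theorem extendMulLeft_inv_apply {y : B} (hy : g⁻¹ * y ∈ B) :
    ((extendMulLeft B g)⁻¹ y : G) = g⁻¹ * y := by
  have h : extendMulLeft B g ⟨g⁻¹ * y, hy⟩ = y :=
    Subtype.ext <| (extendMulLeft_apply (by simp)).trans (mul_inv_cancel_left g y)
  rw [Equiv.Perm.inv_eq_iff_eq.mpr h.symm]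

end Equiv.Perm

namespace FreeGroup

variable {α : Type*}

def wordBall (L : ℕ) : Set (FreeGroup α) := mk '' {ℓ | ℓ.length ≤ L}

theorem mk_mem_wordBall {L : ℕ} {ℓ : List (α × Bool)} (h : ℓ.length ≤ L) : mk ℓ ∈ wordBall L :=
  ⟨ℓ, h, rfl⟩

theorem one_mem_wordBall (L : ℕ) : (1 : FreeGroup α) ∈ wordBall L :=
  mk_mem_wordBall (ℓ := []) (Nat.zero_le L)

variable [Finite α]

instance (L : ℕ) : Finite (wordBall (α := α) L) :=
  ((List.finite_length_le _ L).image mk).to_subtype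

noncomputable def wordBallAction (L : ℕ) : FreeGroup α →* Equiv.Perm (wordBall (α := α) L) :=
  lift fun a => Equiv.Perm.extendMulLeft _ (of a)

variable {L : ℕ}

theorem wordBallAction_of_apply {a : α} {x : wordBall L}
    (h : of a * (x : FreeGroup α) ∈ wordBall L) :
    (wordBallAction L (of a) x : FreeGroup α) = of a * x := by
  rw [wordBallAction, lift_apply_of, Equiv.Perm.extendMulLeft_apply h]

theorem wordBallAction_of_inv_apply {a : α} {x : wordBall L}
    (h : (of a)⁻¹ * (x : FreeGroup α) ∈ wordBall L) :
    ((wordBallAction L (of a))⁻¹ x : FreeGroup α) = (of a)⁻¹ * x := by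
  rw [wordBallAction, lift_apply_of, Equiv.Perm.extendMulLeft_inv_apply h]

theorem wordBallAction_mk_one {ℓ : List (α × Bool)} (hℓ : ℓ.length ≤ L) :
    (wordBallAction L (mk ℓ) ⟨1, one_mem_wordBall L⟩ : FreeGroup α) = mk ℓ := by
  induction ℓ with
  | nil => rfl
  | cons x ℓ ih =>
    obtain ⟨a, b⟩ := x
    set y := wordBallAction L (mk ℓ) ⟨1, one_mem_wordBall L⟩
    have hy : (y : FreeGroup α) = mk ℓ := ih (by simp only [List.length_cons] at hℓ; omega)
    cases b
    · have e : mk ((a, false) :: ℓ) = (of a)⁻¹ * mk ℓ := by simp [of, inv_mk, invRev, mul_mk]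
      have hmem : (of a)⁻¹ * (y : FreeGroup α) ∈ wordBall L := hy ▸ e ▸ mk_mem_wordBall hℓ
      rw [e, _root_.map_mul, _root_.map_inv, Equiv.Perm.mul_apply,
        wordBallAction_of_inv_apply hmem, hy]
    · have e : mk ((a, true) :: ℓ) = of a * mk ℓ := by simp [of, mul_mk]
      have hmem : of a * (y : FreeGroup α) ∈ wordBall L := hy ▸ e ▸ mk_mem_wordBall hℓ
      rw [e, _root_.map_mul, Equiv.Perm.mul_apply, wordBallAction_of_apply hmem, hy]

instance : Group.ResiduallyFinite (FreeGroup α) := by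
  classical
  refine Group.residuallyFinite_of_forall_exists_finite_monoidHom fun w hw =>
    ⟨_, inferInstance, inferInstance, wordBallAction w.toWord.length, fun h => hw ?_⟩
  have := wordBallAction_mk_one (le_refl w.toWord.length)
  rw [mk_toWord, h] at this
  exact this.symm

end FreeGroup

namespace QuotientGroup

variable {G : Type*} [Group G] (K : Subgroup G) [K.Characteristic]

def mulAutMap : MulAut G →* MulAut (G ⧸ K) where
  toFun e := congr K K e (Subgroup.characteristic_iff_map_eq.mp ‹_› e)
  map_one' := by
    ext q
    induction q using QuotientGroup.induction_on
    rfl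
  map_mul' e e' := by
    ext q
    induction q using QuotientGroup.induction_on
    rfl

end QuotientGroup

namespace SemidirectProduct

open Subgroup QuotientGroup

theorem inr_mem_center {N H : Type*} [Group N] [CommGroup H] {φ : H →* MulAut N} {h : H}
    (hh : φ h = 1) : (inr h : N ⋊[φ] H) ∈ center (N ⋊[φ] H) :=
  mem_center_iff.mpr fun x => by ext <;> simp [hh, mul_comm]

section General

variable {N H : Type*} [Group N] [Group H] {φ : H →* MulAut N}

theorem mem_map_inr {S : Subgroup H} {x : N ⋊[φ] H} :
    x ∈ S.map (inr : H →* N ⋊[φ] H) ↔ x.left = 1 ∧ x.right ∈ S := by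
  refine ⟨?_, fun h => ⟨x.right, h.2, ?_⟩⟩
  · rintro ⟨h, hS, rfl⟩
    simpa
  · ext <;> simp [h.1]

variable (φ) (K : Subgroup N) [K.Characteristic]

def quotientLeft : N ⋊[φ] H →* (N ⧸ K) ⋊[(mulAutMap K).comp φ] H :=
  map (mk' K) (MonoidHom.id H) fun _ => by ext; rfl

end General

variable {G : Type*} [Group G] (φ : Multiplicative ℤ →* MulAut G)
  (K : Subgroup G) [K.Characteristic] (N : ℕ)

/-- `K ⋊ Nℤ`, taken as a preimage in `(G ⧸ K) ⋊ ℤ`, where `Nℤ` is central as soon as `φ N` acts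
trivially on `G ⧸ K`. -/
def subgroupZMultiples : Subgroup (G ⋊[φ] Multiplicative ℤ) :=
  ((AddSubgroup.zmultiples (N : ℤ)).toSubgroup.map inr).comap (quotientLeft φ K)

variable {φ K N}

theorem mem_subgroupZMultiples {x : G ⋊[φ] Multiplicative ℤ} :
    x ∈ subgroupZMultiples φ K N ↔ x.left ∈ K ∧ (N : ℤ) ∣ x.right.toAdd := by
  rw [subgroupZMultiples, Subgroup.mem_comap, mem_map_inr]
  simp [quotientLeft, Int.mem_zmultiples_iff]

theorem subgroupZMultiples_normal (hN : mulAutMap K (φ (.ofAdd (N : ℤ))) = 1) :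
    (subgroupZMultiples φ K N).Normal := by
  refine Normal.comap ⟨?_⟩ _
  rintro _ ⟨z, hz, rfl⟩ g
  obtain ⟨k, hk⟩ : (N : ℤ) ∣ z.toAdd := Int.mem_zmultiples_iff.mp hz
  have hcentral : ((mulAutMap K).comp φ) z = 1 := by
    have hz' : z = .ofAdd (N : ℤ) ^ k := by
      rw [← ofAdd_zsmul, smul_eq_mul, mul_comm, ← hk, ofAdd_toAdd]
    rw [hz', map_zpow, MonoidHom.comp_apply, hN, one_zpow]
  rw [mem_center_iff.mp (inr_mem_center hcentral) g, mul_inv_cancel_right]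
  exact ⟨z, hz, rfl⟩

theorem subgroupZMultiples_mono {K' : Subgroup G} [K'.Characteristic] {N' : ℕ} (hK : K' ≤ K)
    (hN : N ∣ N') : subgroupZMultiples φ K' N' ≤ subgroupZMultiples φ K N := fun _ hx => by
  rw [mem_subgroupZMultiples] at hx ⊢
  exact ⟨hK hx.1, (Int.natCast_dvd_natCast.mpr hN).trans hx.2⟩

theorem subgroupZMultiples_finiteIndex [K.FiniteIndex] (hN : N ≠ 0) :
    (subgroupZMultiples φ K N).FiniteIndex := by
  have : NeZero N := ⟨hN⟩
  refine finiteIndex_of_inv_mul_mem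
    (fun x => ((x.left : G ⧸ K), ((x.right.toAdd : ℤ) : ZMod N))) fun x y hxy => ?_
  obtain ⟨hleft, hright⟩ := Prod.mk.inj hxy
  rw [mem_subgroupZMultiples]
  refine ⟨?_, ?_⟩
  · rw [mul_left, inv_left, inv_right, ← map_mul]
    exact (characteristic_iff_le_comap.mp ‹_› _) (QuotientGroup.eq.mp hleft)
  · simpa [← sub_eq_neg_add] using (ZMod.intCast_eq_intCast_iff_dvd_sub _ _ _).mp hright

theorem le_index_subgroupZMultiples [K.FiniteIndex] (hN : N ≠ 0) :
    N ≤ (subgroupZMultiples φ K N).index := by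
  have := subgroupZMultiples_finiteIndex (φ := φ) (K := K) hN
  let A := (AddSubgroup.zmultiples (N : ℤ)).toSubgroup.comap (rightHom (φ := φ))
  have hA : A.index = N := by
    rw [index_comap_of_surjective _ rightHom_surjective, AddSubgroup.index_toSubgroup,
      Int.index_zmultiples, Int.natAbs_natCast]
  have hle : subgroupZMultiples φ K N ≤ A := fun x hx =>
    Int.mem_zmultiples_iff.mpr (mem_subgroupZMultiples.mp hx).2
  have h := Nat.le_of_dvd (Nat.pos_of_ne_zero this.index_ne_zero) (index_dvd_of_le hle)
  rwa [hA] at h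

theorem iInf_subgroupZMultiples_eq_bot {K : ℕ → Subgroup G} [∀ i, (K i).Characteristic]
    {N : ℕ → ℕ} (hK : ⨅ i, K i = ⊥) (hN : Tendsto N atTop atTop) :
    ⨅ i, subgroupZMultiples φ (K i) (N i) = ⊥ := by
  refine (eq_bot_iff_forall _).mpr fun x hx => ?_
  have hmem i := mem_subgroupZMultiples.mp (mem_iInf.mp hx i)
  have hleft : x.left = 1 := by
    simpa [hK] using mem_iInf.mpr fun i => (hmem i).1
  obtain ⟨i, hi⟩ := (hN.eventually_gt_atTop x.right.toAdd.natAbs).exists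
  have hright : x.right.toAdd = 0 :=
    Int.eq_zero_of_dvd_of_natAbs_lt_natAbs (hmem i).2 (by simpa using hi)
  ext
  · exact hleft
  · simpa using hright

theorem closure_inl_union_inr {s : Set G} (hs : Subgroup.closure s = K) :
    Subgroup.closure (inl '' s ∪ {inr (.ofAdd (N : ℤ))}) = subgroupZMultiples φ K N := by
  apply le_antisymm
  · rw [closure_le, Set.union_subset_iff, Set.singleton_subset_iff, Set.image_subset_iff]
    refine ⟨fun g hg => ?_, ?_⟩ <;>
      simp only [Set.mem_preimage, SetLike.mem_coe, mem_subgroupZMultiples]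
    · simpa [← hs] using subset_closure hg
    · simp
  · intro x hx
    obtain ⟨hleft, k, hk⟩ := mem_subgroupZMultiples.mp hx
    rw [← inl_left_mul_inr_right x]
    refine mul_mem ?_ ?_
    · have h : inl x.left ∈ (Subgroup.closure s).map (inl (φ := φ)) := ⟨x.left, hs ▸ hleft, rfl⟩
      rw [MonoidHom.map_closure] at h
      exact closure_mono Set.subset_union_left h
    · have hr : x.right = .ofAdd (N : ℤ) ^ k := by
        rw [← ofAdd_zsmul, smul_eq_mul, mul_comm, ← hk, ofAdd_toAdd]
      rw [hr, map_zpow]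
      exact zpow_mem (subset_closure (Set.mem_union_right _ (Set.mem_singleton _))) k

theorem exists_finset_closure_subgroupZMultiples (s : Finset G)
    (hs : Subgroup.closure (s : Set G) = K) :
    ∃ S : Finset (subgroupZMultiples φ K N),
      Subgroup.closure (S : Set (subgroupZMultiples φ K N)) = ⊤ ∧ S.card ≤ s.card + 1 := by
  classical
  obtain ⟨S, hS, hcard⟩ := exists_finset_closure_eq_top_card_le
    (s.image (inl (φ := φ)) ∪ {inr (.ofAdd (N : ℤ))})
    (by push_cast; exact closure_inl_union_inr hs)
  refine ⟨S, hS, hcard.trans <| (Finset.card_union_le _ _).trans ?_⟩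
  simpa using Finset.card_image_le

end SemidirectProduct

theorem Nat.exists_dvd_chain (d b : ℕ → ℕ) (hd : ∀ i, 0 < d i) :
    ∃ N : ℕ → ℕ, (∀ i, d i ∣ N i) ∧ (∀ i, N i ∣ N (i + 1)) ∧ ∀ i, b i ≤ N i := by
  have hpos i : 1 ≤ d i * (b i + 1) := Nat.mul_pos (hd i) (Nat.succ_pos _)
  refine ⟨fun i => ∏ j ∈ Finset.range (i + 1), d j * (b j + 1), fun i => ?_, fun i => ?_,
    fun i => ?_⟩
  · exact (dvd_mul_right _ _).trans (Finset.dvd_prod_of_mem _ (Finset.self_mem_range_succ i))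
  · exact Finset.prod_dvd_prod_of_subset _ _ _ (Finset.range_subset_range.mpr (Nat.le_succ _))
  · calc b i ≤ d i * (b i + 1) := (Nat.le_succ _).trans (Nat.le_mul_of_pos_left _ (hd i))
      _ ≤ _ := Finset.single_le_prod' (fun j _ => hpos j) (Finset.self_mem_range_succ i)

open Subgroup QuotientGroup in
theorem SemidirectProduct.exists_normal_cofinal_filtration {G : Type*} [Group G] [Group.FG G]
    [Group.ResiduallyFinite G] (φ : Multiplicative ℤ →* MulAut G) (f : ℕ → ℝ≥0)
    (hf : Tendsto f atTop atTop) :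
    ∃ P : ℕ → Subgroup (G ⋊[φ] Multiplicative ℤ),
      (∀ i, (P i).FiniteIndex) ∧
      (∀ i, P (i + 1) ≤ P i) ∧
      (⨅ i, P i) = ⊥ ∧
      (∀ i, (P i).Normal) ∧
      (∀ i, ∃ S : Finset ↥(P i),
        Subgroup.closure (S : Set ↥(P i)) = ⊤ ∧ (S.card : ℝ≥0) ≤ f ((P i).index)) := by
  choose s hs using fun i => (Group.fg_iff_subgroup_fg (permKernel G i)).mp inferInstance
  choose M hM using fun i => tendsto_atTop_atTop.mp hf ((s i).card + 1 : ℝ≥0)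
  obtain ⟨N, hdN, hNN, hMN⟩ := Nat.exists_dvd_chain
    (fun i => orderOf (mulAutMap (permKernel G i) (φ (.ofAdd 1)))) (fun i => M i + i + 1)
    fun i => orderOf_pos _
  have hN0 i : N i ≠ 0 := by have := hMN i; omega
  have hact i : mulAutMap (permKernel G i) (φ (.ofAdd (N i : ℤ))) = 1 := by
    rw [show Multiplicative.ofAdd (N i : ℤ) = .ofAdd 1 ^ N i by simp [← ofAdd_nsmul], map_pow,
      map_pow, orderOf_dvd_iff_pow_eq_one.mp (hdN i)]
  refine ⟨fun i => subgroupZMultiples φ (permKernel G i) (N i),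
    fun i => subgroupZMultiples_finiteIndex (hN0 i),
    fun i => subgroupZMultiples_mono (permKernel_antitone (Nat.le_succ i)) (hNN i),
    iInf_subgroupZMultiples_eq_bot iInf_permKernel_eq_bot
      (tendsto_atTop_mono (fun i => show i ≤ N i by have := hMN i; omega) tendsto_id),
    fun i => subgroupZMultiples_normal (hact i), fun i => ?_⟩
  obtain ⟨S, hS, hcard⟩ := exists_finset_closure_subgroupZMultiples (N := N i) (s i) (hs i)
  refine ⟨S, hS, ?_⟩
  calc (S.card : ℝ≥0) ≤ (s i).card + 1 := by exact_mod_cast hcard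
    _ ≤ _ := hM i _ (le_trans (by have := hMN i; omega) (le_index_subgroupZMultiples (hN0 i)))

/-- **Lemma 2.4 (free-fiber case).** Let `Γ = ℤ ⋉_φ G` be a semidirect product of `ℤ`
with a free group `G` of finite rank `r`, and let `f : ℕ → ℝ≥0` with `f n → ∞`.  Then
there is a normal cofinal filtration `{Γᵢ}` of `Γ` with `d(Γᵢ) ≤ f([Γ:Γᵢ])` for every
`i`, where `d` denotes the minimal number of generators. -/
theorem slow_rank_growth_semidirect_free
    (r : ℕ) (φ : Multiplicative ℤ →* MulAut (FreeGroup (Fin r)))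
    (f : ℕ → ℝ≥0) (hf : Filter.Tendsto f Filter.atTop Filter.atTop) :
    ∃ P : ℕ → Subgroup (FreeGroup (Fin r) ⋊[φ] Multiplicative ℤ),
      (∀ i, (P i).FiniteIndex) ∧
      (∀ i, P (i + 1) ≤ P i) ∧
      (⨅ i, P i) = ⊥ ∧
      (∀ i, (P i).Normal) ∧
      (∀ i, ∃ S : Finset ↥(P i),
        Subgroup.closure (S : Set ↥(P i)) = ⊤ ∧ (S.card : ℝ≥0) ≤ f ((P i).index)) :=
  SemidirectProduct.exists_normal_cofinal_filtration φ f hf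
end

section
/- Let Γ be a group, let α: Γ → F be an epimorphism onto a free group F of finite rank r ≥ 2, let φ: F → ℤ be an epimorphism, let ρ: Γ → Q be a homomorphism onto a finite group Q, and let n ≥ 1. Let ψ_n: Γ → ℤ/n be the composition of φ∘α with the canonical projection ℤ → ℤ/n, and let Γ' = ker(ρ × ψ_n : Γ → Q × ℤ/n). Then b₁(Γ') ≥ n(r−1)+1; in particular b₁(Γ') ≥ n. -/
open scoped TensorProduct

/-- The first Betti number of a group `G`: the `ℚ`-dimension of
`H₁(G;ℚ) = (G^{ab}) ⊗_ℤ ℚ`. -/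
noncomputable def b1 (G : Type*) [Group G] : Cardinal :=
  Module.rank ℚ (ℚ ⊗[ℤ] (Additive (Abelianization G)))

/-!
Write `t : F → G` for the surjection of the free group `F` of rank `r` onto `G = ℤ/n`, and let
`M = ℚ^G` be the coinduced module. Crossed homomorphisms `F → M` (Fox derivatives) may take
arbitrary values on the generators, so they form a space `V` of dimension `r n`; restricted to
`ker t` and evaluated at `1 ∈ G` each of them is a homomorphism `ker t → ℚ`, hence, through `α`,
a homomorphism `Γ' → ℚ`. If this homomorphism vanishes, the derivation vanishes on the normal
subgroup `α Γ'` (conjugation moves the evaluation point around `G`), hence on all of `ker t`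
(every `k ∈ ker t` has the power `k ^ |Q|` in `α Γ'`), so it is principal. Principal derivations
form a space of dimension at most `n - 1`, because the constants are invariant. Hence
`Hom(Γ', ℚ)` contains a space of dimension at least `r n - (n - 1) = n (r - 1) + 1`.
-/

open Module Submodule

theorem finrank_span_range_le_b1 {H W : Type*} [Group H] [AddCommGroup W] [Module ℚ W]
    [FiniteDimensional ℚ W] (χ : H →* Multiplicative W) :
    (finrank ℚ (span ℚ (Set.range fun h => (χ h).toAdd)) : Cardinal) ≤ b1 H := by
  let l := (MonoidHom.toAdditiveLeft (Abelianization.lift χ)).toIntLinearMap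
  have hl : span ℚ (Set.range fun h => (χ h).toAdd) = LinearMap.range (l.liftBaseChange ℚ) := by
    rw [LinearMap.range_liftBaseChange]
    congr 1
    ext w
    constructor
    · rintro ⟨h, rfl⟩
      exact ⟨.ofMul (Abelianization.of h), by simp [l]⟩
    · rintro ⟨m, rfl⟩
      obtain ⟨h, hh⟩ := QuotientGroup.mk_surjective m.toMul
      exact ⟨h, by rw [← ofMul_toMul m, ← hh]; rfl⟩
  have := lift_rank_range_le (l.liftBaseChange ℚ)
  rw [← hl, ← finrank_eq_rank, Cardinal.lift_natCast] at this
  simpa [b1] using this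

/-- `f` is a crossed homomorphism from `Γ` to the coinduced module `G → U`, on which `Γ` acts
through `t` by `(g • w) x = w (g⁻¹ * x)`. -/
def IsCrossedHom {Γ G U : Type*} [Group Γ] [Group G] [AddCommGroup U] (t : Γ →* G)
    (f : Γ → G → U) : Prop :=
  ∀ a b x, f (a * b) x = f a x + f b ((t a)⁻¹ * x)

theorem FreeGroup.exists_isCrossedHom {ι G U : Type*} [Group G] [AddCommGroup U]
    (t : FreeGroup ι →* G) (u : ι → G → U) :
    ∃ f : FreeGroup ι → G → U, IsCrossedHom t f ∧ ∀ i, f (of i) = u i := by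
  let φ : FreeGroup ι →* (G → Multiplicative U) ⋊[mulAutArrow] G :=
    FreeGroup.lift fun i => ⟨fun x => .ofAdd (u i x), t (of i)⟩
  have hφ : ∀ a, (φ a).right = t a := DFunLike.congr_fun <|
    show SemidirectProduct.rightHom.comp φ = t from FreeGroup.ext_hom _ _ fun i => by simp [φ]
  refine ⟨fun a x => ((φ a).left x).toAdd, fun a b x => ?_, fun i => by simp [φ]⟩
  simp only [_root_.map_mul, SemidirectProduct.mul_left, hφ, Pi.mul_apply,
    mulAutArrow_apply_apply, toAdd_mul, add_right_inj, EmbeddingLike.apply_eq_iff_eq]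
  rfl

variable (K : Type*) [Field K] in
def coboundaryMap {ι G : Type*} [Group G] (s : ι → G) : (G → K) →ₗ[K] ι → G → K :=
  LinearMap.pi fun i => LinearMap.funLeft K K ((s i)⁻¹ * ·) - LinearMap.id

theorem finrank_range_coboundaryMap_le {K ι G : Type*} [Field K] [Group G] [Fintype G]
    (s : ι → G) : finrank K (LinearMap.range (coboundaryMap K s)) ≤ Fintype.card G - 1 := by
  have hconst : (fun _ => 1 : G → K) ∈ LinearMap.ker (coboundaryMap K s) := by
    ext; simp [coboundaryMap]
  have hker : 1 ≤ finrank K (LinearMap.ker (coboundaryMap K s)) :=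
    one_le_finrank_iff.mpr <| (Submodule.ne_bot_iff _).mpr
      ⟨_, hconst, fun h => by simpa using congrFun h 1⟩
  have := LinearMap.finrank_range_add_finrank_ker (coboundaryMap K s)
  rw [finrank_fintype_fun_eq_card] at this
  omega

namespace IsCrossedHom

variable {Γ G U : Type*} [Group Γ] [Group G] [AddCommGroup U] {t : Γ →* G} {f : Γ → G → U}

theorem map_one (hf : IsCrossedHom t f) : f 1 = 0 := by
  funext x
  simpa using hf 1 1 x

theorem postcomp {U' : Type*} [AddCommGroup U'] (hf : IsCrossedHom t f) (L : U →+ U') :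
    IsCrossedHom t fun a x => L (f a x) := fun a b x => by
  simp only [hf a b x, map_add]

theorem apply_conj (hf : IsCrossedHom t f) (a : Γ) {k : Γ} (hk : t k = 1) (x : G) :
    f (a * k * a⁻¹) x = f k ((t a)⁻¹ * x) := by
  have hinv := congrFun hf.map_one x
  rw [← mul_inv_cancel a, hf] at hinv
  rw [hf, hf, map_mul, hk, mul_one, add_right_comm, hinv, Pi.zero_apply, zero_add]

theorem map_pow (hf : IsCrossedHom t f) {k : Γ} (hk : t k = 1) (m : ℕ) :
    f (k ^ m) = m • f k := by
  induction m with
  | zero => simpa using hf.map_one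
  | succ m ih =>
    funext x
    rw [pow_succ, hf, _root_.map_pow, hk, one_pow, inv_one, one_mul, ih, succ_nsmul]
    rfl

theorem eq_of_map_eq (hf : IsCrossedHom t f) (h0 : ∀ k, t k = 1 → f k = 0) {a b : Γ}
    (hab : t a = t b) : f a = f b := by
  funext x
  have hk : t (b⁻¹ * a) = 1 := by rw [map_mul, map_inv, hab, inv_mul_cancel]
  rw [← mul_inv_cancel_left b a, hf, h0 _ hk]
  simp

/-- The coinduced module has no first cohomology: for a section `s` of `t`,
`w y = -f (s y) y` is an explicit primitive. -/
theorem exists_eq_sub (hf : IsCrossedHom t f) (ht : Function.Surjective t)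
    (h0 : ∀ k, t k = 1 → f k = 0) : ∃ w : G → U, ∀ a x, f a x = w ((t a)⁻¹ * x) - w x := by
  let s := Function.surjInv ht
  have hs : ∀ y, t (s y) = y := Function.surjInv_eq ht
  refine ⟨fun y => -f (s y) y, fun a x => ?_⟩
  have key := hf a (a⁻¹ * s x) x
  rw [mul_inv_cancel_left, hf.eq_of_map_eq h0 (a := a⁻¹ * s x) (b := s ((t a)⁻¹ * x))
    (by rw [map_mul, map_inv, hs, hs])] at key
  simp only [key]
  abel

theorem eq_zero_of_apply_one_eq_zero (hf : IsCrossedHom t f) (ht : Function.Surjective t)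
    {H : Subgroup Γ} [H.Normal] (hH : H ≤ t.ker) (h1 : ∀ k ∈ H, f k 1 = 0) :
    ∀ k ∈ H, f k = 0 := by
  intro k hk
  funext x
  obtain ⟨a, ha⟩ := ht x⁻¹
  have := h1 _ (Subgroup.Normal.conj_mem ‹_› k hk a)
  rwa [hf.apply_conj a (hH hk), ha, inv_inv, mul_one] at this

theorem eq_zero_of_pow_mem [IsAddTorsionFree U] (hf : IsCrossedHom t f) {H : Subgroup Γ}
    (hH : ∀ k ∈ H, f k = 0) (hpow : ∀ k, t k = 1 → ∃ m ≠ 0, k ^ m ∈ H) :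
    ∀ k, t k = 1 → f k = 0 := by
  intro k hk
  obtain ⟨m, hm, hkm⟩ := hpow k hk
  have := hH _ hkm
  rw [hf.map_pow hk] at this
  exact (nsmul_eq_zero_iff.mp this).resolve_right hm

theorem mem_range_coboundaryMap {K ι : Type*} [Field K] {f : Γ → G → K} (hf : IsCrossedHom t f)
    (ht : Function.Surjective t) (h0 : ∀ k, t k = 1 → f k = 0) (g : ι → Γ) :
    (fun i => f (g i)) ∈ LinearMap.range (coboundaryMap K fun i => t (g i)) := by
  obtain ⟨w, hw⟩ := hf.exists_eq_sub ht h0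
  exact ⟨w, by ext i x; simp [coboundaryMap, hw]⟩

def evalOneHom {Λ : Type*} [Group Λ] (hf : IsCrossedHom t f) (β : Λ →* Γ)
    (hβ : ∀ μ, t (β μ) = 1) : Λ →* Multiplicative U where
  toFun μ := .ofAdd (f (β μ) 1)
  map_one' := by simp [hf.map_one]
  map_mul' μ ν := by simp [hf _ _ 1, hβ]

end IsCrossedHom

theorem card_mul_sub_one_add_one_le_b1 {Λ ι G : Type*} [Group Λ] [Fintype ι] [Nonempty ι]
    [Group G] [Fintype G] (t : FreeGroup ι →* G) (ht : Function.Surjective t)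
    (β : Λ →* FreeGroup ι) [β.range.Normal] (hβ : ∀ μ, t (β μ) = 1)
    (hpow : ∀ k, t k = 1 → ∃ m ≠ 0, k ^ m ∈ β.range) :
    ((Fintype.card G * (Fintype.card ι - 1) + 1 : ℕ) : Cardinal) ≤ b1 Λ := by
  -- One derivation with values in `Dual V` packages all of them: the derivation with generator
  -- values `v : V` is `fun a x => D a x v`, so it depends linearly on `v`.
  obtain ⟨D, hD, hDof⟩ := FreeGroup.exists_isCrossedHom (U := Module.Dual ℚ (ι → G → ℚ)) t
    fun i x => LinearMap.proj x ∘ₗ LinearMap.proj i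
  let χ := hD.evalOneHom β hβ
  let S := span ℚ (Set.range fun μ => (χ μ).toAdd)
  have hS : S.dualCoannihilator ≤ LinearMap.range (coboundaryMap ℚ fun i => t (.of i)) := by
    intro v hv
    rw [← SetLike.mem_coe, coe_dualCoannihilator_span] at hv
    have hd := hD.postcomp (Module.Dual.eval ℚ _ v).toAddMonoidHom
    have h1 : ∀ k ∈ β.range, D k 1 v = 0 := by
      rintro _ ⟨μ, rfl⟩
      exact hv _ ⟨μ, rfl⟩
    have hrange : β.range ≤ t.ker := by
      rintro _ ⟨μ, rfl⟩
      exact hβ μ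
    have := hd.mem_range_coboundaryMap ht
      (hd.eq_zero_of_pow_mem (hd.eq_zero_of_apply_one_eq_zero ht hrange h1) hpow) .of
    simpa [hDof] using this
  have hdual := Subspace.finrank_add_finrank_dualCoannihilator_eq S
  have hcob := (finrank_mono hS).trans (finrank_range_coboundaryMap_le (K := ℚ) _)
  have hV : finrank ℚ (ι → G → ℚ) = Fintype.card G * (Fintype.card ι - 1) + Fintype.card G := by
    rw [← Nat.mul_add_one, Nat.sub_add_cancel Fintype.card_pos]
    simp [finrank_pi_fintype, mul_comm]
  rw [hV] at hdual
  refine le_trans (Nat.cast_le.mpr ?_) (finrank_span_range_le_b1 χ)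
  change _ ≤ finrank ℚ S
  have : 0 < Fintype.card G := Fintype.card_pos
  omega

theorem betti_lower_bound_of_kernel_general
    (Γ : Type*) [Group Γ]
    (r : ℕ) (hr : 2 ≤ r) (α : Γ →* FreeGroup (Fin r)) (hα : Function.Surjective α)
    (φ : FreeGroup (Fin r) →* Multiplicative ℤ) (hφ : Function.Surjective φ)
    (Q : Type*) [Group Q] [Finite Q] (ρ : Γ →* Q)
    (n : ℕ) (hn : 1 ≤ n)
    (Γ' : Subgroup Γ)
    (hΓ' : Γ' = (ρ.prod
      (((AddMonoidHom.toMultiplicative (Int.castAddHom (ZMod n))).comp φ).comp α)).ker) :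
    ((n * (r - 1) + 1 : ℕ) : Cardinal) ≤ b1 ↥Γ' ∧ ((n : ℕ) : Cardinal) ≤ b1 ↥Γ' := by
  have : NeZero n := ⟨by omega⟩
  have : Nonempty (Fin r) := ⟨⟨0, by omega⟩⟩
  set ψ := (AddMonoidHom.toMultiplicative (Int.castAddHom (ZMod n))).comp φ
  have hmem : ∀ γ, γ ∈ Γ' ↔ ρ γ = 1 ∧ ψ (α γ) = 1 := fun γ => by
    rw [hΓ', MonoidHom.mem_ker, MonoidHom.prod_apply, Prod.mk_eq_one]; rfl
  have hψ : Function.Surjective ψ :=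
    (Multiplicative.ofAdd.surjective.comp
      (ZMod.intCast_surjective.comp Multiplicative.toAdd.surjective)).comp hφ
  have : (α.comp Γ'.subtype).range.Normal := by
    rw [MonoidHom.range_comp, Subgroup.range_subtype, hΓ']
    exact (MonoidHom.normal_ker _).map α hα
  have hpow : ∀ k, ψ k = 1 → ∃ m ≠ 0, k ^ m ∈ (α.comp Γ'.subtype).range := by
    intro k hk
    obtain ⟨γ, rfl⟩ := hα k
    have hγ : γ ^ Nat.card Q ∈ Γ' := (hmem _).2 ⟨by rw [map_pow, pow_card_eq_one'], by
      rw [map_pow, map_pow, hk, one_pow]⟩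
    exact ⟨Nat.card Q, Nat.card_pos.ne', ⟨γ ^ Nat.card Q, hγ⟩, by simp⟩
  have key := card_mul_sub_one_add_one_le_b1 ψ hψ (α.comp Γ'.subtype)
    (fun γ => ((hmem γ).1 γ.2).2) hpow
  rw [Fintype.card_multiplicative, ZMod.card, Fintype.card_fin] at key
  refine ⟨key, le_trans (Nat.cast_le.mpr ?_) key⟩
  have := Nat.le_mul_of_pos_right n (show 0 < r - 1 by omega)
  omega

/-- **The key step in Lemma 2.2.** Let `α : Γ → F` be an epimorphism onto a free group
of rank `r ≥ 2`, let `φ : F → ℤ` be an epimorphism, let `ρ : Γ → Q` be an epimorphism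
onto a finite group, and let `n ≥ 1`.  Let `ψₙ : Γ → ℤ/n` be `φ ∘ α` reduced mod `n`
and let `Γ' = ker (ρ × ψₙ : Γ → Q × ℤ/n)`.  Then `b₁(Γ') ≥ n(r−1)+1`; in particular
`b₁(Γ') ≥ n`. -/
theorem betti_lower_bound_of_kernel
    (Γ : Type*) [Group Γ]
    (r : ℕ) (hr : 2 ≤ r) (α : Γ →* FreeGroup (Fin r)) (hα : Function.Surjective α)
    (φ : FreeGroup (Fin r) →* Multiplicative ℤ) (hφ : Function.Surjective φ)
    (Q : Type*) [Group Q] [Finite Q] (ρ : Γ →* Q) (hρ : Function.Surjective ρ)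
    (n : ℕ) (hn : 1 ≤ n)
    (Γ' : Subgroup Γ)
    (hΓ' : Γ' = (ρ.prod
      (((AddMonoidHom.toMultiplicative (Int.castAddHom (ZMod n))).comp φ).comp α)).ker) :
    ((n * (r - 1) + 1 : ℕ) : Cardinal) ≤ b1 ↥Γ' ∧ ((n : ℕ) : Cardinal) ≤ b1 ↥Γ' :=
  betti_lower_bound_of_kernel_general Γ r hr α hα φ hφ Q ρ n hn Γ' hΓ'
end
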